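/- arXiv:1707.01986 — 2 statements merged into one kernel-verified Lean document; each statement's English description precedes it below -/
import Mathlib

section
/- Let 0 ≤ t₀ < t₁ and let h : [t₀, t₁] → ℝ be a nonnegative bounded function. Suppose there exist δ ∈ [0,1), exponents α₁,…,α_N ≥ 0, and bounded monotone increasing functions A₁,…,A_N : [t₀,t₁] → ℝ (each nonnegative) such that for all t₀ ≤ t < s ≤ t₁ one has h(t) ≤ δ·h(s) + Σᵢ Aᵢ(s)/(s−t)^{αᵢ}. Then there exists a constant C depending only on δ and the αᵢ such that for all t₀ ≤ t < s ≤ t₁, h(t) ≤ C · Σᵢ Aᵢ(s)/(s−t)^{αᵢ}. -/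
open Set Filter Topology Finset

/-!
Iterate the hypothesis along `t = u₀ < u₁ < ⋯ → s` with `u_{k+1} - u_k = τ^k (1 - τ) (s - t)`.
After `m` steps, `h t ≤ δ^m h(u_m) + ∑_{k<m} δ^k ∑ᵢ Aᵢ(u_{k+1}) / (u_{k+1} - u_k)^{αᵢ}`. By
monotonicity `Aᵢ(u_{k+1}) ≤ Aᵢ(s)`, so the `k`-th term is at most `(δ / τ^{αᵢ})^k (1 - τ)^{-αᵢ}` times
`Aᵢ(s) / (s - t)^{αᵢ}`. Choosing `τ < 1` so close to `1` that `δ < τ^a` with `a ≥ αᵢ` for all `i`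
makes these terms geometric with ratio `δ / τ^a < 1`, while `δ^m h(u_m) → 0` since `h` is bounded.
-/

theorem exists_rpow_gt_of_lt_one {δ : ℝ} (hδ : δ < 1) (a : ℝ) :
    ∃ τ, 0 < τ ∧ τ < 1 ∧ δ < τ ^ a := by
  have hlim : Tendsto (fun τ : ℝ => τ ^ a) (𝓝[<] 1) (𝓝 1) := by
    simpa using ((Real.continuousAt_rpow_const 1 a (Or.inl one_ne_zero)).tendsto).mono_left
      nhdsWithin_le_nhds
  obtain ⟨τ, ⟨hτ0, hτ1⟩, hτ⟩ :=
    (Filter.Eventually.and (Ioo_mem_nhdsLT zero_lt_one)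
      (hlim.eventually (lt_mem_nhds hδ))).exists
  exact ⟨τ, hτ0, hτ1, hτ⟩

theorem le_pow_mul_add_sum_of_le_mul_add {δ : ℝ} (hδ : 0 ≤ δ) {f g : ℕ → ℝ}
    (hrec : ∀ k, f k ≤ δ * f (k + 1) + g k) (m : ℕ) :
    f 0 ≤ δ ^ m * f m + ∑ k ∈ range m, δ ^ k * g k := by
  induction m with
  | zero => simp
  | succ m ih =>
    have := mul_le_mul_of_nonneg_left (hrec m) (pow_nonneg hδ m)
    rw [sum_range_succ, pow_succ]
    linarith

theorem le_div_one_sub_of_le_mul_add {δ θ K M : ℝ} (hδ0 : 0 ≤ δ) (hδ1 : δ < 1)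
    (hθ0 : 0 ≤ θ) (hθ1 : θ < 1) (hM : 0 ≤ M) {f g : ℕ → ℝ} (hf : ∀ k, f k ≤ K)
    (hrec : ∀ k, f k ≤ δ * f (k + 1) + g k) (hg : ∀ k, δ ^ k * g k ≤ θ ^ k * M) :
    f 0 ≤ M / (1 - θ) := by
  have hbound : ∀ m, f 0 ≤ δ ^ m * K + M / (1 - θ) := fun m => calc
    f 0 ≤ δ ^ m * f m + ∑ k ∈ range m, δ ^ k * g k :=
      le_pow_mul_add_sum_of_le_mul_add hδ0 hrec m
    _ ≤ δ ^ m * K + (∑ k ∈ range m, θ ^ k) * M := by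
      rw [sum_mul]
      exact add_le_add (mul_le_mul_of_nonneg_left (hf m) (pow_nonneg hδ0 m))
        (sum_le_sum fun k _ => hg k)
    _ ≤ δ ^ m * K + 1 / (1 - θ) * M := by
      gcongr
      simpa using geom_sum_Ico_le_of_lt_one (m := 0) (n := m) hθ0 hθ1
    _ = δ ^ m * K + M / (1 - θ) := by ring
  have hlim : Tendsto (fun m : ℕ => δ ^ m * K + M / (1 - θ)) atTop (𝓝 (M / (1 - θ))) := by
    simpa using ((tendsto_pow_atTop_nhds_zero_of_lt_one hδ0 hδ1).mul_const K).add_const _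
  exact ge_of_tendsto' hlim hbound

def approach (t s τ : ℝ) (k : ℕ) : ℝ := s - τ ^ k * (s - t)

section approach

variable {t s τ : ℝ}

theorem approach_zero : approach t s τ 0 = t := by simp [approach]

theorem approach_succ_sub (k : ℕ) :
    approach t s τ (k + 1) - approach t s τ k = τ ^ k * (1 - τ) * (s - t) := by
  simp only [approach, pow_succ]; ring

theorem le_approach (hts : t < s) (hτ0 : 0 < τ) (hτ1 : τ < 1) (k : ℕ) :
    t ≤ approach t s τ k := by
  have : τ ^ k * (s - t) ≤ s - t :=
    mul_le_of_le_one_left (sub_nonneg.2 hts.le) (pow_le_one₀ hτ0.le hτ1.le)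
  simp only [approach]; linarith

theorem approach_lt (hts : t < s) (hτ0 : 0 < τ) (k : ℕ) : approach t s τ k < s := by
  have : 0 < τ ^ k * (s - t) := by have := sub_pos.2 hts; positivity
  simp only [approach]; linarith

theorem approach_lt_succ (hts : t < s) (hτ0 : 0 < τ) (hτ1 : τ < 1) (k : ℕ) :
    approach t s τ k < approach t s τ (k + 1) := by
  have : 0 < τ ^ k * (1 - τ) * (s - t) := by
    have := sub_pos.2 hts; have := sub_pos.2 hτ1; positivity
  linarith [approach_succ_sub (t := t) (s := s) (τ := τ) k]

end approach

theorem pow_mul_div_rpow_le {δ τ a b d x y : ℝ} (hδ : 0 ≤ δ) (hτ0 : 0 < τ) (hτ1 : τ < 1)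
    (hba : b ≤ a) (hd : 0 < d) (hx : 0 ≤ x) (hxy : x ≤ y) (k : ℕ) :
    δ ^ k * (x / (τ ^ k * (1 - τ) * d) ^ b) ≤
      (δ / τ ^ a) ^ k * (1 / (1 - τ) ^ a * (y / d ^ b)) := by
  have h1τ : 0 < 1 - τ := sub_pos.2 hτ1
  have hsplit : δ ^ k * (x / (τ ^ k * (1 - τ) * d) ^ b) =
      (δ / τ ^ b) ^ k * (1 / (1 - τ) ^ b * (x / d ^ b)) := by
    have : 0 < τ ^ b := Real.rpow_pos_of_pos hτ0 b
    have : 0 < (1 - τ) ^ b := Real.rpow_pos_of_pos h1τ b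
    have : 0 < d ^ b := Real.rpow_pos_of_pos hd b
    rw [Real.mul_rpow (by positivity) hd.le, Real.mul_rpow (by positivity) h1τ.le,
      ← Real.rpow_pow_comm hτ0.le, div_pow]
    field_simp
  rw [hsplit]
  gcongr (δ / ?_) ^ k * (1 / ?_ * (?_ / _))
  · exact Real.rpow_le_rpow_of_exponent_ge hτ0 hτ1.le hba
  · exact Real.rpow_le_rpow_of_exponent_ge h1τ (by linarith) hba

theorem pow_mul_sum_div_rpow_le {ι : Type*} [Fintype ι] {δ τ a d : ℝ} {b x y : ι → ℝ}
    (hδ : 0 ≤ δ) (hτ0 : 0 < τ) (hτ1 : τ < 1) (hba : ∀ i, b i ≤ a) (hd : 0 < d)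
    (hx : ∀ i, 0 ≤ x i) (hxy : ∀ i, x i ≤ y i) (k : ℕ) :
    δ ^ k * ∑ i, x i / (τ ^ k * (1 - τ) * d) ^ b i ≤
      (δ / τ ^ a) ^ k * (1 / (1 - τ) ^ a * ∑ i, y i / d ^ b i) := by
  simp only [mul_sum]
  exact sum_le_sum fun i _ => pow_mul_div_rpow_le hδ hτ0 hτ1 (hba i) hd (hx i) (hxy i) k

theorem stmt0_general (N : ℕ) (δ : ℝ) (hδ0 : 0 ≤ δ) (hδ1 : δ < 1)
    (α : Fin N → ℝ) :
    ∃ C : ℝ, 0 < C ∧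
      ∀ (t₀ t₁ : ℝ) (h : ℝ → ℝ) (A : Fin N → ℝ → ℝ),
        0 ≤ t₀ → t₀ < t₁ →
        (∀ t ∈ Icc t₀ t₁, 0 ≤ h t) →
        (∃ K, ∀ t ∈ Icc t₀ t₁, h t ≤ K) →
        (∀ i, ∀ t ∈ Icc t₀ t₁, 0 ≤ A i t) →
        (∀ i, ∃ K, ∀ t ∈ Icc t₀ t₁, A i t ≤ K) →
        (∀ i, MonotoneOn (A i) (Icc t₀ t₁)) →
        (∀ t s, t₀ ≤ t → t < s → s ≤ t₁ →
          h t ≤ δ * h s + ∑ i, A i s / (s - t) ^ (α i)) →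
        ∀ t s, t₀ ≤ t → t < s → s ≤ t₁ →
          h t ≤ C * ∑ i, A i s / (s - t) ^ (α i) := by
  set a := ∑ i, |α i|
  have hαa (i : Fin N) : α i ≤ a :=
    (le_abs_self _).trans (single_le_sum (fun j _ => abs_nonneg (α j)) (mem_univ i))
  obtain ⟨τ, hτ0, hτ1, hδτ⟩ := exists_rpow_gt_of_lt_one hδ1 a
  have hτa : 0 < τ ^ a := Real.rpow_pos_of_pos hτ0 a
  have h1τ : 0 < 1 - τ := sub_pos.2 hτ1
  have hθ1 : δ / τ ^ a < 1 := (div_lt_one hτa).2 hδτ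
  refine ⟨1 / (1 - τ) ^ a / (1 - δ / τ ^ a), by have := sub_pos.2 hθ1; positivity, ?_⟩
  rintro t₀ t₁ h A - - - ⟨K, hK⟩ hA0 - hAmono hrec t s ht₀ hts hs₁
  set u := approach t s τ
  have hu (k : ℕ) : u k ∈ Icc t₀ t₁ :=
    ⟨ht₀.trans (le_approach hts hτ0 hτ1 k), (approach_lt hts hτ0 k).le.trans hs₁⟩
  have hs : s ∈ Icc t₀ t₁ := ⟨ht₀.trans hts.le, hs₁⟩
  have hst : 0 < s - t := sub_pos.2 hts
  have hS : 0 ≤ ∑ i, A i s / (s - t) ^ α i :=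
    sum_nonneg fun i _ => div_nonneg (hA0 i s hs) (Real.rpow_pos_of_pos hst _).le
  have key := le_div_one_sub_of_le_mul_add (f := fun k => h (u k))
    (M := 1 / (1 - τ) ^ a * ∑ i, A i s / (s - t) ^ α i) hδ0 hδ1
    (div_nonneg hδ0 hτa.le) hθ1 (by positivity) (fun k => hK _ (hu k))
    (fun k => hrec _ _ (hu k).1 (approach_lt_succ hts hτ0 hτ1 k) (hu (k + 1)).2)
    (fun k => by
      rw [approach_succ_sub]
      exact pow_mul_sum_div_rpow_le hδ0 hτ0 hτ1 hαa hst (fun i => hA0 i _ (hu (k + 1)))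
        (fun i => hAmono i (hu (k + 1)) hs (approach_lt hts hτ0 _).le) k)
  simpa [u, approach_zero, div_mul_eq_mul_div] using key

/-- Giaquinta-type iteration lemma with bounded increasing coefficients `A i`. -/
theorem stmt0 (N : ℕ) (δ : ℝ) (hδ0 : 0 ≤ δ) (hδ1 : δ < 1)
    (α : Fin N → ℝ) (hα : ∀ i, 0 ≤ α i) :
    ∃ C : ℝ, 0 < C ∧
      ∀ (t₀ t₁ : ℝ) (h : ℝ → ℝ) (A : Fin N → ℝ → ℝ),
        0 ≤ t₀ → t₀ < t₁ →
        (∀ t ∈ Icc t₀ t₁, 0 ≤ h t) →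
        (∃ K, ∀ t ∈ Icc t₀ t₁, h t ≤ K) →
        (∀ i, ∀ t ∈ Icc t₀ t₁, 0 ≤ A i t) →
        (∀ i, ∃ K, ∀ t ∈ Icc t₀ t₁, A i t ≤ K) →
        (∀ i, MonotoneOn (A i) (Icc t₀ t₁)) →
        (∀ t s, t₀ ≤ t → t < s → s ≤ t₁ →
          h t ≤ δ * h s + ∑ i, A i s / (s - t) ^ (α i)) →
        ∀ t s, t₀ ≤ t → t < s → s ≤ t₁ →
          h t ≤ C * ∑ i, A i s / (s - t) ^ (α i) :=
  stmt0_general N δ hδ0 hδ1 α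
end

section
/- Let g : Ω → ℝ be nonnegative and measurable on a measure space of finite measure, let Λ > 0, and suppose ∫_{{g > Λ}} g dμ + ∫_Λ^∞ (1/t) ( ∫_{{g > t}} g dμ ) dt ≤ A for some A. Then ∫_{{g > Λ}} g · log(e + g/Λ) dμ ≤ 2A. In particular, combining with ∫_{{g ≤ Λ}} g · log(e + g/Λ) dμ ≤ log(e+1) · ∫_{{g ≤ Λ}} g dμ, one controls the full L log L integral of g (normalized by Λ). -/
/-!
Write `y = g / Λ`. For `g z > Λ` one has `∫_Λ^{g z} dt / t = log y`, so Tonelli's theorem turns the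
layer integral `∫_Λ^∞ (1/t) ∫_{g > t} g dμ dt` into `∫_{g > Λ} g log y dμ`. The pointwise
inequality `log (e + y) ≤ 2 (log y + 1)` for `y ≥ 1`, which follows from `e + y ≤ (e y)²`, then
bounds the `L log L` integral above level `Λ` by twice the hypothesis. Below level `Λ`, `y ≤ 1` and
the integrand is at most `log (e + 1) · g`.
-/

open MeasureTheory Set Real
open scoped ENNReal

namespace Real

lemma log_exp_one_add_le {y : ℝ} (hy : 1 ≤ y) : log (exp 1 + y) ≤ 2 * (log y + 1) := by
  have he : 2 ≤ exp 1 := by linarith [add_one_le_exp (1 : ℝ)]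
  have hey : 2 ≤ exp 1 * y := by nlinarith
  have hsq : exp 1 + y ≤ (exp 1 * y) ^ 2 := by nlinarith
  calc log (exp 1 + y) ≤ log ((exp 1 * y) ^ 2) := log_le_log (by positivity) hsq
    _ = 2 * (log y + 1) := by
      rw [log_pow, log_mul (exp_pos 1).ne' (by positivity), log_exp]; push_cast; ring

lemma mul_log_exp_one_add_div_le {x Λ : ℝ} (hΛ : 0 < Λ) (hx : Λ ≤ x) :
    x * log (exp 1 + x / Λ) ≤ 2 * (x * log (x / Λ) + x) := by
  have := mul_le_mul_of_nonneg_left (log_exp_one_add_le ((one_le_div hΛ).2 hx))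
    (hΛ.le.trans hx)
  linarith

lemma mul_log_exp_one_add_div_le_of_le {x Λ : ℝ} (hΛ : 0 < Λ) (hx : 0 ≤ x) (hxΛ : x ≤ Λ) :
    x * log (exp 1 + x / Λ) ≤ log (exp 1 + 1) * x := by
  rw [mul_comm (log _)]
  refine mul_le_mul_of_nonneg_left (log_le_log (by positivity) ?_) hx
  linarith [(div_le_one hΛ).2 hxΛ]

lemma mul_log_div_nonpos {x Λ : ℝ} (hΛ : 0 < Λ) (hx : 0 ≤ x) (hxΛ : x ≤ Λ) :
    x * log (x / Λ) ≤ 0 :=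
  mul_nonpos_of_nonneg_of_nonpos hx (log_nonpos (by positivity) ((div_le_one hΛ).2 hxΛ))

end Real

lemma lintegral_Ioo_ofReal_div {a b : ℝ} (ha : 0 < a) (hb : 0 ≤ b) :
    ∫⁻ t in Ioo a b, ENNReal.ofReal (b / t) = ENNReal.ofReal (b * log (b / a)) := by
  rcases le_or_gt b a with hba | hab
  · rw [Ioo_eq_empty hba.not_gt, Measure.restrict_empty, lintegral_zero_measure, eq_comm,
      ENNReal.ofReal_eq_zero]
    exact mul_log_div_nonpos ha hb hba
  · have hint : IntegrableOn (fun t => b / t) (Ioo a b) :=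
      (ContinuousOn.integrableOn_Icc (continuousOn_const.div continuousOn_id
        fun t ht => (ha.trans_le ht.1).ne')).mono_set Ioo_subset_Icc_self
    rw [← ofReal_integral_eq_lintegral_ofReal hint
      (ae_restrict_of_forall_mem measurableSet_Ioo fun t ht => div_nonneg hb (ha.trans ht.1).le),
      ← integral_Ioc_eq_integral_Ioo, ← intervalIntegral.integral_of_le hab.le]
    simp_rw [div_eq_mul_inv]
    rw [intervalIntegral.integral_const_mul, integral_inv_of_pos ha (ha.trans hab),
      div_eq_mul_inv b a]

/-- When `u` is not integrable, neither is `f ≥ u`, and the left side is the junk value `0`. -/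
lemma integral_le_mul_add_of_le {α : Type*} [MeasurableSpace α] {μ : Measure α} {f u v : α → ℝ}
    {c : ℝ} (hc : 0 ≤ c) (hu : AEStronglyMeasurable u μ) (hv : Integrable v μ)
    (hu0 : 0 ≤ᵐ[μ] u) (hv0 : 0 ≤ᵐ[μ] v) (huf : u ≤ᵐ[μ] f)
    (hfuv : f ≤ᵐ[μ] fun x => c * (u x + v x)) :
    ∫ x, f x ∂μ ≤ c * (∫ x, u x ∂μ + ∫ x, v x ∂μ) := by
  by_cases hui : Integrable u μ
  · calc ∫ x, f x ∂μ ≤ ∫ x, c * (u x + v x) ∂μ :=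
          integral_mono_of_nonneg (hu0.trans huf) ((hui.add hv).const_mul c) hfuv
      _ = c * (∫ x, u x ∂μ + ∫ x, v x ∂μ) := by rw [integral_const_mul, integral_add hui hv]
  · have hfi : ¬ Integrable f μ := fun hfi => hui <| hfi.mono' hu <| by
      filter_upwards [hu0, huf] with x hx0 hxf
      rwa [Real.norm_of_nonneg hx0]
    rw [integral_undef hfi, integral_undef hui, zero_add]
    exact mul_nonneg hc (integral_nonneg_of_ae hv0)

section LayerCake

variable {Ω : Type*} [MeasurableSpace Ω] (μ : Measure Ω) {g : Ω → ℝ} {Λ : ℝ}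

lemma lintegral_Ioi_setLIntegral_lt_eq [SFinite μ] (hgm : Measurable g) {F : ℝ → Ω → ℝ≥0∞}
    (hF : Measurable (Function.uncurry F)) (a : ℝ) :
    ∫⁻ t in Ioi a, ∫⁻ z in {z | t < g z}, F t z ∂μ = ∫⁻ z, (∫⁻ t in Ioo a (g z), F t z) ∂μ := by
  set E : Set (ℝ × Ω) := {p | p.1 < g p.2}
  have hE : MeasurableSet E := measurableSet_lt measurable_fst (hgm.comp measurable_snd)
  calc ∫⁻ t in Ioi a, ∫⁻ z in {z | t < g z}, F t z ∂μ
      = ∫⁻ t in Ioi a, ∫⁻ z, E.indicator (Function.uncurry F) (t, z) ∂μ := by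
        refine lintegral_congr fun t => ?_
        rw [← lintegral_indicator (measurableSet_lt measurable_const hgm)]
        rfl
    _ = ∫⁻ z, (∫⁻ t in Ioi a, E.indicator (Function.uncurry F) (t, z)) ∂μ :=
        lintegral_lintegral_swap (hF.indicator hE).aemeasurable
    _ = ∫⁻ z, (∫⁻ t in Ioo a (g z), F t z) ∂μ := by
        refine lintegral_congr fun z => ?_
        rw [← Ioi_inter_Iio, inter_comm, ← Measure.restrict_restrict measurableSet_Iio,
          ← lintegral_indicator measurableSet_Iio]
        rfl

lemma lintegral_mul_log_div_eq [SFinite μ] (hg0 : ∀ z, 0 ≤ g z) (hgm : Measurable g)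
    (hΛ : 0 < Λ) :
    ∫⁻ z in {z | Λ < g z}, ENNReal.ofReal (g z * log (g z / Λ)) ∂μ =
      ∫⁻ t in Ioi Λ, ∫⁻ z in {z | t < g z}, ENNReal.ofReal (g z / t) ∂μ := by
  rw [lintegral_Ioi_setLIntegral_lt_eq μ hgm (by fun_prop) Λ]
  simp_rw [lintegral_Ioo_ofReal_div hΛ (hg0 _)]
  refine setLIntegral_eq_of_support_subset fun z hz => ?_
  by_contra hzΛ
  exact hz (ENNReal.ofReal_eq_zero.2 (mul_log_div_nonpos hΛ (hg0 z) (not_lt.1 hzΛ)))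

lemma setIntegral_mul_log_div_eq [SFinite μ] (hg0 : ∀ z, 0 ≤ g z) (hgm : Measurable g)
    (hgi : Integrable g μ) (hΛ : 0 < Λ) :
    ∫ z in {z | Λ < g z}, g z * log (g z / Λ) ∂μ =
      ∫ t in Ioi Λ, (1 / t) * ∫ z in {z | t < g z}, g z ∂μ := by
  have hS : MeasurableSet {z | Λ < g z} := measurableSet_lt measurable_const hgm
  have hlayer_anti : Antitone fun t => ∫ z in {z | t < g z}, g z ∂μ := fun s t hst =>
    setIntegral_mono_set hgi.integrableOn (ae_of_all _ hg0)
      (ae_of_all _ fun z (hz : t < g z) => hst.trans_lt hz)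
  rw [integral_eq_lintegral_of_nonneg_ae
      (ae_restrict_of_forall_mem hS fun z hz =>
        mul_nonneg (hg0 z) (log_nonneg ((one_le_div hΛ).2 (le_of_lt hz))))
      (hgm.mul (hgm.div_const Λ).log).aestronglyMeasurable,
    integral_eq_lintegral_of_nonneg_ae
      (ae_restrict_of_forall_mem measurableSet_Ioi fun t ht =>
        mul_nonneg (one_div_nonneg.2 (hΛ.trans ht).le) (integral_nonneg fun z => hg0 z))
      ((measurable_const.div measurable_id').mul hlayer_anti.measurable).aestronglyMeasurable,
    lintegral_mul_log_div_eq μ hg0 hgm hΛ]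
  congr 1
  refine setLIntegral_congr_fun measurableSet_Ioi fun t ht => ?_
  rw [← ofReal_integral_eq_lintegral_ofReal (hgi.integrableOn.div_const t)
      (ae_of_all _ fun z => div_nonneg (hg0 z) (hΛ.trans ht).le), integral_div, one_div_mul_eq_div]

lemma setIntegral_mul_log_exp_one_add_div_le [SFinite μ] (hg0 : ∀ z, 0 ≤ g z)
    (hgm : Measurable g) (hgi : Integrable g μ) (hΛ : 0 < Λ) :
    ∫ z in {z | Λ < g z}, g z * log (exp 1 + g z / Λ) ∂μ ≤
      2 * ((∫ z in {z | Λ < g z}, g z ∂μ) +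
        ∫ t in Ioi Λ, (1 / t) * ∫ z in {z | t < g z}, g z ∂μ) := by
  have hS : MeasurableSet {z | Λ < g z} := measurableSet_lt measurable_const hgm
  have hbound := integral_le_mul_add_of_le (μ := μ.restrict {z | Λ < g z})
    (f := fun z => g z * log (exp 1 + g z / Λ)) (u := fun z => g z * log (g z / Λ)) zero_le_two
    (hgm.mul (hgm.div_const Λ).log).aestronglyMeasurable hgi.integrableOn
    (ae_restrict_of_forall_mem hS fun z hz =>
      mul_nonneg (hg0 z) (log_nonneg ((one_le_div hΛ).2 (le_of_lt hz))))
    (ae_of_all _ hg0)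
    (ae_restrict_of_forall_mem hS fun z hz => mul_le_mul_of_nonneg_left
      (log_le_log (div_pos (hΛ.trans hz) hΛ) (by linarith [exp_pos 1])) (hg0 z))
    (ae_restrict_of_forall_mem hS fun z hz => mul_log_exp_one_add_div_le hΛ (le_of_lt hz))
  rw [setIntegral_mul_log_div_eq μ hg0 hgm hgi hΛ] at hbound
  linarith

lemma setIntegral_mul_log_exp_one_add_div_le_of_le (hg0 : ∀ z, 0 ≤ g z) (hgm : Measurable g)
    (hgi : Integrable g μ) (hΛ : 0 < Λ) :
    ∫ z in {z | g z ≤ Λ}, g z * log (exp 1 + g z / Λ) ∂μ ≤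
      log (exp 1 + 1) * ∫ z in {z | g z ≤ Λ}, g z ∂μ := by
  rw [← integral_const_mul]
  refine integral_mono_of_nonneg (ae_of_all _ fun z => ?_) (hgi.integrableOn.const_mul _)
    (ae_restrict_of_forall_mem (measurableSet_le hgm measurable_const) fun z hz =>
      mul_log_exp_one_add_div_le_of_le hΛ (hg0 z) hz)
  have he : 1 ≤ exp 1 := one_le_exp zero_le_one
  exact mul_nonneg (hg0 z) (log_nonneg (by linarith [div_nonneg (hg0 z) hΛ.le]))

end LayerCake

/-- Layer-cake estimate used in the `L log L` maximal-function inequality: if the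
truncated integral plus the logarithmic layer integral are bounded by `A`, then the
`L log L` integral of `g` above level `Λ` is at most `2A`; moreover below level `Λ`
the `L log L` integrand is trivially controlled. -/
theorem stmt5 {Ω : Type*} [MeasurableSpace Ω] (μ : Measure Ω) [IsFiniteMeasure μ]
    (g : Ω → ℝ) (hg0 : ∀ z, 0 ≤ g z) (hgm : Measurable g) (hgi : Integrable g μ)
    (Λ : ℝ) (hΛ : 0 < Λ) (A : ℝ)
    (hA : (∫ z in {z | Λ < g z}, g z ∂μ) +
        (∫ t in Ioi Λ, (1 / t) * ∫ z in {z | t < g z}, g z ∂μ) ≤ A) :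
    (∫ z in {z | Λ < g z}, g z * Real.log (Real.exp 1 + g z / Λ) ∂μ) ≤ 2 * A ∧
    (∫ z in {z | g z ≤ Λ}, g z * Real.log (Real.exp 1 + g z / Λ) ∂μ) ≤
      Real.log (Real.exp 1 + 1) * ∫ z in {z | g z ≤ Λ}, g z ∂μ :=
  ⟨(setIntegral_mul_log_exp_one_add_div_le μ hg0 hgm hgi hΛ).trans (by linarith),
    setIntegral_mul_log_exp_one_add_div_le_of_le μ hg0 hgm hgi hΛ⟩
end
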